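/- Let T be a forest, k ≥ 3, and let Y be a 1-cross-cut of the k-expansion T^{(k)} (a set meeting each edge of T^{(k)} in exactly one vertex). Then the (k−1)-uniform hypergraph 𝒞 = {E ∖ Y : E an edge of T^{(k)}} is a generalized (k−1)-forest. -/

import Mathlib

/-!
Induct on the edges of the forest. Some edge `xy` has a leaf `x` among the remaining edges; its
expanded edge meets the other expanded edges only in `y`, so after removing `Y` it meets the
edges of `𝒞` built so far at most in `y`. Hence it can be attached with defining set `{y}` if
`y` survives in one of them, and with the empty defining set otherwise.
-/

/-- The `k`-expansion `T^(k)` of a graph `T`: each edge `e = xy` of `T` is replaced by the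
`k`-set consisting of `x`, `y` and `k - 2` new vertices private to `e` (so new vertices of
distinct edges are distinct, and disjoint from `V(T)`). -/
def expansion (k : ℕ) {V : Type*} [Fintype V] [DecidableEq V] (T : SimpleGraph V)
    [DecidableRel T.Adj] : Finset (Finset (V ⊕ Sym2 V × Fin (k - 2))) :=
  T.edgeFinset.image (fun e =>
    ((Finset.univ.filter (fun v => v ∈ e)).image Sum.inl) ∪
      (Finset.univ.image (fun i : Fin (k - 2) => Sum.inr (e, i))))

/-- `σ(T) = min { |X| + e(T ∖ X) : X independent in T }`. -/
noncomputable def graphSigma {V : Type*} (T : SimpleGraph V) : ℕ :=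
  sInf {m | ∃ X : Set V, (∀ x ∈ X, ∀ y ∈ X, ¬ T.Adj x y) ∧ X.Finite ∧
    m = X.ncard + {e ∈ T.edgeSet | ∀ x ∈ X, x ∉ e}.ncard}

/-- `τ(T)`: the minimum size of a set of vertices meeting every edge of `T`. -/
noncomputable def graphTau {V : Type*} (T : SimpleGraph V) : ℕ :=
  sInf {m | ∃ S : Set V, (∀ e ∈ T.edgeSet, ∃ x ∈ S, x ∈ e) ∧ S.Finite ∧ m = S.ncard}

/-- `H` contains a copy of the hypergraph `Ts` (a subhypergraph isomorphic to `Ts`). -/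
def ContainsCopy {α β : Type*} [DecidableEq α] [DecidableEq β]
    (H : Finset (Finset β)) (Ts : Finset (Finset α)) : Prop :=
  ∃ f : α → β, Set.InjOn f ↑(Ts.sup id) ∧ ∀ E ∈ Ts, E.image f ∈ H

/-- A generalized `m`-forest (edges together with defining sets). -/
inductive KForest {α : Type*} [DecidableEq α] (m : ℕ) :
    List (Finset α) → List (Finset α) → Prop
  | single (E : Finset α) (hE : E.card = m) : KForest m [E] []
  | extend {l As : List (Finset α)} (h : KForest m l As) (A B E : Finset α)
      (hE : E ∈ l) (hA : A ⊆ E) (hB : ∀ F ∈ l, Disjoint B F)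
      (hcard : A.card + B.card = m) : KForest m (l ++ [A ∪ B]) (As ++ [A])

section GeneralizedForest

variable {α : Type*} [DecidableEq α] {m : ℕ}

def IsGeneralizedForest (m : ℕ) (H : Finset (Finset α)) : Prop :=
  ∃ l As : List (Finset α), KForest m l As ∧ l.Nodup ∧ l.toFinset = H

theorem isGeneralizedForest_singleton {C : Finset α} (hC : C.card = m) :
    IsGeneralizedForest m {C} :=
  ⟨[C], [], .single C hC, List.nodup_singleton C, rfl⟩

theorem KForest.extend_of_inter_subset {l As : List (Finset α)} (h : KForest m l As)
    {C E : Finset α} (hE : E ∈ l) (hC : C.card = m) (hCE : ∀ F ∈ l, C ∩ F ⊆ E) :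
    KForest m (l ++ [C]) (As ++ [C ∩ E]) := by
  have hB : ∀ F ∈ l, Disjoint (C \ E) F := by
    refine fun F hF => Finset.disjoint_left.mpr fun z hz hzF => ?_
    obtain ⟨hzC, hzE⟩ := Finset.mem_sdiff.mp hz
    exact hzE (hCE F hF (Finset.mem_inter.mpr ⟨hzC, hzF⟩))
  have hcard : (C ∩ E).card + (C \ E).card = m := by
    rw [Finset.card_inter_add_card_sdiff, hC]
  have := h.extend (C ∩ E) (C \ E) E hE Finset.inter_subset_right hB hcard
  rwa [Finset.union_comm, Finset.sdiff_union_inter] at this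

theorem IsGeneralizedForest.insert {H : Finset (Finset α)} (hH : IsGeneralizedForest m H)
    (hne : H.Nonempty) {C : Finset α} (hC : C.card = m) (a : α)
    (hCH : ∀ F ∈ H, F ≠ C → C ∩ F ⊆ {a}) : IsGeneralizedForest m (insert C H) := by
  by_cases hmem : C ∈ H
  · rwa [Finset.insert_eq_of_mem hmem]
  obtain ⟨l, As, hl, hnd, rfl⟩ := hH
  have hne' : ∀ F ∈ l, F ≠ C := fun F hF hFC => hmem (hFC ▸ List.mem_toFinset.mpr hF)
  obtain ⟨E, hE, hCE⟩ : ∃ E ∈ l, ∀ F ∈ l, C ∩ F ⊆ E := by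
    by_cases ha : ∃ E ∈ l, a ∈ E
    · obtain ⟨E, hE, haE⟩ := ha
      refine ⟨E, hE, fun F hF => (hCH F (List.mem_toFinset.mpr hF) (hne' F hF)).trans ?_⟩
      simpa using haE
    · obtain ⟨E, hE⟩ := hne
      refine ⟨E, List.mem_toFinset.mp hE, fun F hF z hz => ?_⟩
      have hza := hCH F (List.mem_toFinset.mpr hF) (hne' F hF) hz
      rw [Finset.mem_singleton] at hza
      exact absurd ⟨F, hF, hza ▸ (Finset.mem_inter.mp hz).2⟩ ha
  refine ⟨l ++ [C], As ++ [C ∩ E], hl.extend_of_inter_subset hE hC hCE, ?_, ?_⟩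
  · exact hnd.append (List.nodup_singleton C) fun F hF hFC => hne' F hF (List.mem_singleton.mp hFC)
  · rw [List.toFinset_append, Finset.union_comm]
    rfl

end GeneralizedForest

namespace SimpleGraph

variable {V : Type*} {G : SimpleGraph V}

theorem IsAcyclic.exists_adj_forall_adj_eq [Finite G.edgeSet] (hG : G.IsAcyclic)
    (hne : G.edgeSet.Nonempty) : ∃ x y, G.Adj x y ∧ ∀ z, G.Adj x z → z = y := by
  obtain ⟨e, he⟩ := hne
  induction e using Sym2.ind with | _ a b =>
  have hab : G.Adj a b := he
  have : Nonempty V := ⟨a⟩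
  obtain ⟨u, v, p, hp, hmax⟩ := Walk.exists_isPath_forall_isPath_length_le_length G
  have hnil : ¬ p.Nil := by
    have := hmax a b (Walk.cons hab .nil) (by simp [hab.ne])
    rw [← Walk.length_eq_zero_iff]
    simp only [Walk.length_cons, Walk.length_nil] at this
    omega
  refine ⟨u, p.snd, p.adj_snd hnil, fun w hw => hG.eq_snd_of_adj_start hp hw ?_⟩
  by_contra hwp
  have := hmax w v (p.cons hw.symm) (hp.cons hwp)
  simp only [Walk.length_cons] at this
  omega

theorem IsAcyclic.exists_leaf_edge {T : SimpleGraph V} (hT : T.IsAcyclic) {S : Finset (Sym2 V)}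
    (hS : ↑S ⊆ T.edgeSet) (hne : S.Nonempty) :
    ∃ x y, s(x, y) ∈ S ∧ ∀ f ∈ S, x ∈ f → f = s(x, y) := by
  set G := fromEdgeSet (S : Set (Sym2 V))
  have hGT : G ≤ T := fun a b hab => hS ((fromEdgeSet_adj _).mp hab).1
  have hGS : G.edgeSet = ↑S := by
    rw [edgeSet_fromEdgeSet, sdiff_eq_left.mpr]
    exact Set.disjoint_left.mpr fun e he => T.not_isDiag_of_mem_edgeSet (hS he)
  have : Finite G.edgeSet := hGS ▸ S.finite_toSet
  obtain ⟨x, y, hxy, hleaf⟩ :=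
    (hT.anti hGT).exists_adj_forall_adj_eq (hGS ▸ hne : G.edgeSet.Nonempty)
  have hxyS : s(x, y) ∈ G.edgeSet := hxy
  rw [hGS] at hxyS
  refine ⟨x, y, hxyS, fun f hf hxf => ?_⟩
  obtain ⟨z, rfl⟩ := Sym2.mem_iff_exists.mp hxf
  have hxz : s(x, z) ∈ G.edgeSet := by rwa [hGS]
  rw [hleaf z hxz]

end SimpleGraph

section Expansion

variable {V : Type*} [Fintype V] [DecidableEq V] {k : ℕ}

def expandEdge (k : ℕ) (e : Sym2 V) : Finset (V ⊕ Sym2 V × Fin (k - 2)) :=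
  ((Finset.univ.filter (fun v => v ∈ e)).image Sum.inl) ∪
    (Finset.univ.image (fun i : Fin (k - 2) => Sum.inr (e, i)))

theorem expansion_eq_image (T : SimpleGraph V) [DecidableRel T.Adj] :
    expansion k T = T.edgeFinset.image (expandEdge k) :=
  rfl

theorem mem_expandEdge {e : Sym2 V} {z : V ⊕ Sym2 V × Fin (k - 2)} :
    z ∈ expandEdge k e ↔ (∃ v ∈ e, z = Sum.inl v) ∨ ∃ i, z = Sum.inr (e, i) := by
  simp [expandEdge, eq_comm]

theorem card_expandEdge (hk : 2 ≤ k) {e : Sym2 V} (he : ¬ e.IsDiag) :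
    (expandEdge k e).card = k := by
  induction e using Sym2.ind with | _ x y =>
  have hxy : x ≠ y := by simpa using he
  have hdisj : Disjoint ((Finset.univ.filter (fun v => v ∈ s(x, y))).image
      (Sum.inl : V → V ⊕ Sym2 V × Fin (k - 2)))
      (Finset.univ.image (fun i : Fin (k - 2) => Sum.inr (s(x, y), i))) := by
    simp [Finset.disjoint_left]
  have hpair : Finset.univ.filter (fun v => v ∈ s(x, y)) = {x, y} := by
    ext v
    simp [Sym2.mem_iff]
  rw [expandEdge, Finset.card_union_of_disjoint hdisj, hpair,
    Finset.card_image_of_injective _ Sum.inl_injective,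
    Finset.card_image_of_injective _ (fun i j hij => by simpa using hij),
    Finset.card_pair hxy, Finset.card_univ, Fintype.card_fin]
  omega

theorem exists_eq_inl_of_mem_expandEdge {e f : Sym2 V} (hef : e ≠ f)
    {z : V ⊕ Sym2 V × Fin (k - 2)} (hze : z ∈ expandEdge k e) (hzf : z ∈ expandEdge k f) :
    ∃ v ∈ e, v ∈ f ∧ z = Sum.inl v := by
  rw [mem_expandEdge] at hze hzf
  rcases hze with ⟨v, hve, rfl⟩ | ⟨i, rfl⟩
  · rcases hzf with ⟨w, hwf, hwv⟩ | ⟨j, h⟩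
    · obtain rfl := Sum.inl_injective hwv
      exact ⟨v, hve, hwf, rfl⟩
    · simp at h
  · rcases hzf with ⟨w, -, h⟩ | ⟨j, h⟩
    · simp at h
    · simp_all

theorem expandEdge_inter_subset_of_notMem {x y : V} {f : Sym2 V} (hxf : x ∉ f)
    (hf : s(x, y) ≠ f) : expandEdge k s(x, y) ∩ expandEdge k f ⊆ {Sum.inl y} := by
  intro z hz
  obtain ⟨hze, hzf⟩ := Finset.mem_inter.mp hz
  obtain ⟨v, hv, hvf, rfl⟩ := exists_eq_inl_of_mem_expandEdge hf hze hzf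
  rcases Sym2.mem_iff.mp hv with rfl | rfl
  · exact absurd hvf hxf
  · exact Finset.mem_singleton_self _

theorem card_expandEdge_sdiff (hk : 2 ≤ k) {e : Sym2 V} (he : ¬ e.IsDiag)
    {Y : Finset (V ⊕ Sym2 V × Fin (k - 2))} (hY : (expandEdge k e ∩ Y).card = 1) :
    (expandEdge k e \ Y).card = k - 1 := by
  have := Finset.card_inter_add_card_sdiff (expandEdge k e) Y
  rw [card_expandEdge hk he, hY] at this
  omega

theorem isGeneralizedForest_image_expandEdge_sdiff {T : SimpleGraph V} (hT : T.IsAcyclic)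
    (hk : 2 ≤ k)
    {Y : Finset (V ⊕ Sym2 V × Fin (k - 2))}
    (hY : ∀ e ∈ T.edgeSet, (expandEdge k e ∩ Y).card = 1) {S : Finset (Sym2 V)}
    (hS : ↑S ⊆ T.edgeSet) (hne : S.Nonempty) :
    IsGeneralizedForest (k - 1) (S.image fun e => expandEdge k e \ Y) := by
  induction S using Finset.strongInduction with | H S ih =>
  obtain ⟨x, y, hxyS, hleaf⟩ := hT.exists_leaf_edge hS hne
  have hcard : ∀ e ∈ S, (expandEdge k e \ Y).card = k - 1 := fun e he =>
    card_expandEdge_sdiff hk (T.not_isDiag_of_mem_edgeSet (hS he)) (hY e (hS he))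
  rcases (S.erase s(x, y)).eq_empty_or_nonempty with hS' | hS'
  · rw [Finset.erase_eq_empty_iff] at hS'
    obtain rfl : S = {s(x, y)} := hS'.resolve_left hne.ne_empty
    exact isGeneralizedForest_singleton (hcard _ (Finset.mem_singleton_self _))
  · have hforest := ih _ (Finset.erase_ssubset hxyS)
      (fun e he => hS (Finset.mem_of_mem_erase he)) hS'
    rw [← Finset.insert_erase hxyS, Finset.image_insert]
    refine hforest.insert (hS'.image _) (hcard _ hxyS) (Sum.inl y) fun F hF _ => ?_
    obtain ⟨f, hf, rfl⟩ := Finset.mem_image.mp hF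
    obtain ⟨hfe, hfS⟩ := Finset.mem_erase.mp hf
    exact (Finset.inter_subset_inter Finset.sdiff_subset Finset.sdiff_subset).trans
      (expandEdge_inter_subset_of_notMem (fun hxf => hfe (hleaf f hfS hxf)) (Ne.symm hfe))

end Expansion

/-- If `Y` is a 1-cross-cut of `T^(k)` (it meets every edge in exactly one vertex), then
`𝒞 = { E ∖ Y : E ∈ T^(k) }` is a generalized `(k-1)`-forest. -/
theorem stmt_18 {V : Type*} [Fintype V] [DecidableEq V] (T : SimpleGraph V)
    [DecidableRel T.Adj] (hT : T.IsAcyclic) (hne : T.edgeSet.Nonempty)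
    (k : ℕ) (hk : 3 ≤ k) (Y : Finset (V ⊕ Sym2 V × Fin (k - 2)))
    (hY : ∀ E ∈ expansion k T, (E ∩ Y).card = 1) :
    ∃ (l As : List (Finset (V ⊕ Sym2 V × Fin (k - 2)))),
      KForest (k - 1) l As ∧ l.Nodup ∧
        l.toFinset = (expansion k T).image (fun E => E \ Y) := by
  have hY' : ∀ e ∈ T.edgeSet, (expandEdge k e ∩ Y).card = 1 := fun e he =>
    hY _ (Finset.mem_image_of_mem _ (T.mem_edgeFinset.mpr he))
  rw [expansion_eq_image, Finset.image_image]
  exact isGeneralizedForest_image_expandEdge_sdiff hT (by omega) hY' (by simp)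
    (by simpa using hne)
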